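/- arXiv:1509.05788 — 6 statements merged into one kernel-verified Lean document; each statement's English description precedes it below -/
import Mathlib

section
/- Suppose C : X → ℝ is convex on a compact interval X and G : [0,E] → ℝ is convex, and for each s let x̂(s) be a minimizer of x ↦ C(x) + G(s+x) over {x ∈ X : s+x ∈ [0,E]}. Then minimizers can be selected so that x̂(s) is nonincreasing in s and s + x̂(s) is nondecreasing in s. Precisely: if s₁ ≤ s₂ and x₁ minimizes for s₁, then there exists a minimizer x₂ for s₂ with x₂ ≤ x₁ and s₂ + x₂ ≥ s₁ + x₁. -/
/-!
Restrict the `s₂`-problem to the points `x ≤ x₁` with `s₂ + x ≥ s₁ + x₁` and take a minimizer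
there, which exists by compactness. It is a global minimizer: a feasible `x > x₁` is beaten by `x₁`,
and one with `s₂ + x < s₁ + x₁` by `s₁ + x₁ - s₂`. Each comparison adds the optimality of `x₁` at
`s₁` to the inequality `f x + f y ≤ f u + f v` (for `u ≤ x, y` and `x + y = u + v`) satisfied by the
convex function `G`, resp. `C`.
-/

open Set

theorem ConvexOn.map_add_map_le_of_add_eq {𝕜 : Type*} [Field 𝕜] [LinearOrder 𝕜]
    [IsStrictOrderedRing 𝕜] {s : Set 𝕜} {f : 𝕜 → 𝕜} (hf : ConvexOn 𝕜 s f) {u v x y : 𝕜}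
    (hu : u ∈ s) (hv : v ∈ s) (hux : u ≤ x) (huy : u ≤ y) (hxy : x + y = u + v) :
    f x + f y ≤ f u + f v := by
  obtain rfl | hux := hux.eq_or_lt
  · rw [show y = v by linarith]
  obtain rfl | huy := huy.eq_or_lt
  · rw [show x = v by linarith, add_comm]
  have hx := hf.secant_mono_aux1 hu hv hux (by linarith)
  have hy := hf.secant_mono_aux1 hu hv huy (by linarith)
  have huv : 0 < v - u := by linarith
  refine le_of_mul_le_mul_left ?_ huv
  linear_combination hx + hy + (f v - f u) * hxy

section Exchange

variable {I J : Set ℝ} {C G : ℝ → ℝ} {s₁ s₂ x₁ x : ℝ}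

theorem cost_le_of_minimizer_lt (hG : ConvexOn ℝ J G) (hs : s₁ ≤ s₂) (hy₁ : s₁ + x₁ ∈ J)
    (hmin₁ : ∀ x ∈ I, s₁ + x ∈ J → C x₁ + G (s₁ + x₁) ≤ C x + G (s₁ + x))
    (hx : x ∈ I) (hy : s₂ + x ∈ J) (hlt : x₁ < x) :
    s₂ + x₁ ∈ J ∧ C x₁ + G (s₂ + x₁) ≤ C x + G (s₂ + x) := by
  have hJ := hG.1.ordConnected
  have hy₁₂ : s₂ + x₁ ∈ J := hJ.out hy₁ hy ⟨by linarith, by linarith⟩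
  have hmin := hmin₁ x hx (hJ.out hy₁ hy ⟨by linarith, by linarith⟩)
  have hquad := hG.map_add_map_le_of_add_eq hy₁ hy (u := s₁ + x₁) (x := s₁ + x)
    (y := s₂ + x₁) (by linarith) (by linarith) (by ring)
  exact ⟨hy₁₂, by linarith⟩

theorem cost_le_of_add_lt_minimizer (hC : ConvexOn ℝ I C) (hs : s₁ ≤ s₂) (hx₁ : x₁ ∈ I)
    (hmin₁ : ∀ x ∈ I, s₁ + x ∈ J → C x₁ + G (s₁ + x₁) ≤ C x + G (s₁ + x))
    (hx : x ∈ I) (hy : s₂ + x ∈ J) (hlt : s₂ + x < s₁ + x₁) :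
    s₁ + x₁ - s₂ ∈ I ∧ C (s₁ + x₁ - s₂) + G (s₁ + x₁) ≤ C x + G (s₂ + x) := by
  have hI := hC.1.ordConnected
  have hx₁₂ : s₁ + x₁ - s₂ ∈ I := hI.out hx hx₁ ⟨by linarith, by linarith⟩
  have hlevel : s₁ + (x + s₂ - s₁) = s₂ + x := by ring
  have hmin := hmin₁ (x + s₂ - s₁) (hI.out hx hx₁ ⟨by linarith, by linarith⟩) (hlevel ▸ hy)
  rw [hlevel] at hmin
  have hquad := hC.map_add_map_le_of_add_eq hx hx₁ (x := s₁ + x₁ - s₂)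
    (y := x + s₂ - s₁) (by linarith) (by linarith) (by ring)
  exact ⟨hx₁₂, by linarith⟩

theorem exists_cost_le_of_minimizer (hC : ConvexOn ℝ I C) (hG : ConvexOn ℝ J G)
    (hs : s₁ ≤ s₂) (hx₁ : x₁ ∈ I) (hy₁ : s₁ + x₁ ∈ J)
    (hmin₁ : ∀ x ∈ I, s₁ + x ∈ J → C x₁ + G (s₁ + x₁) ≤ C x + G (s₁ + x))
    (hx : x ∈ I) (hy : s₂ + x ∈ J) :
    ∃ x' ∈ I, s₂ + x' ∈ J ∧ s₁ + x₁ ≤ s₂ + x' ∧ x' ≤ x₁ ∧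
      C x' + G (s₂ + x') ≤ C x + G (s₂ + x) := by
  by_cases hgt : x₁ < x
  · obtain ⟨hy₁₂, hle⟩ := cost_le_of_minimizer_lt hG hs hy₁ hmin₁ hx hy hgt
    exact ⟨x₁, hx₁, hy₁₂, by linarith, le_rfl, hle⟩
  by_cases hlt : s₂ + x < s₁ + x₁
  · obtain ⟨hx₁₂, hle⟩ := cost_le_of_add_lt_minimizer hC hs hx₁ hmin₁ hx hy hlt
    refine ⟨s₁ + x₁ - s₂, hx₁₂, ?_, by linarith, by linarith, ?_⟩ <;>
      rw [show s₂ + (s₁ + x₁ - s₂) = s₁ + x₁ by ring]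
    exacts [hy₁, hle]
  exact ⟨x, hx, hy, not_lt.1 hlt, not_lt.1 hgt, le_rfl⟩

end Exchange

theorem stmt2_general (PO PI E : ℝ)
    (C G : ℝ → ℝ)
    (hC : ConvexOn ℝ (Icc (-PO) PI) C) (hCc : ContinuousOn C (Icc (-PO) PI))
    (hG : ConvexOn ℝ (Icc 0 E) G) (hGc : ContinuousOn G (Icc 0 E))
    (s₁ s₂ : ℝ) (hs : s₁ ≤ s₂)
    (x₁ : ℝ) (hx₁ : x₁ ∈ Icc (-PO) PI) (hx₁' : s₁ + x₁ ∈ Icc 0 E)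
    (hmin₁ : ∀ x ∈ Icc (-PO) PI, s₁ + x ∈ Icc 0 E →
      C x₁ + G (s₁ + x₁) ≤ C x + G (s₁ + x))
    (hfeas₂ : ∃ x ∈ Icc (-PO) PI, s₂ + x ∈ Icc 0 E) :
    ∃ x₂ ∈ Icc (-PO) PI, s₂ + x₂ ∈ Icc 0 E ∧
      (∀ x ∈ Icc (-PO) PI, s₂ + x ∈ Icc 0 E → C x₂ + G (s₂ + x₂) ≤ C x + G (s₂ + x)) ∧
      x₂ ≤ x₁ ∧ s₁ + x₁ ≤ s₂ + x₂ := by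
  set K := Icc (-PO) PI ∩ (s₂ + ·) ⁻¹' Icc (s₁ + x₁) E ∩ Iic x₁
  have hK : IsCompact K := isCompact_Icc.of_isClosed_subset
    ((isClosed_Icc.inter (isClosed_Icc.preimage (continuous_const_add s₂))).inter isClosed_Iic)
    fun x hx => hx.1.1
  have hcost (x) (hx : x ∈ Icc (-PO) PI) (hy : s₂ + x ∈ Icc 0 E) :
      ∃ x' ∈ K, C x' + G (s₂ + x') ≤ C x + G (s₂ + x) := by
    obtain ⟨x', hx', hy', hle₁, hle₂, hle⟩ :=
      exists_cost_le_of_minimizer hC hG hs hx₁ hx₁' hmin₁ hx hy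
    exact ⟨x', ⟨⟨hx', hle₁, hy'.2⟩, hle₂⟩, hle⟩
  have hcont : ContinuousOn (fun x => C x + G (s₂ + x)) K :=
    (hCc.mono fun x hx => hx.1.1).add <| hGc.comp (continuousOn_const.add continuousOn_id)
      fun x hx => ⟨hx₁'.1.trans hx.1.2.1, hx.1.2.2⟩
  obtain ⟨xf, hxf, hyf⟩ := hfeas₂
  obtain ⟨x', hx'K, -⟩ := hcost xf hxf hyf
  obtain ⟨x₂, ⟨⟨hx₂, hy₂⟩, hx₂₁⟩, hmin₂⟩ := hK.exists_isMinOn ⟨x', hx'K⟩ hcont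
  refine ⟨x₂, hx₂, ⟨hx₁'.1.trans hy₂.1, hy₂.2⟩, fun x hx hy => ?_, hx₂₁, hy₂.1⟩
  obtain ⟨x', hx'K, hle⟩ := hcost x hx hy
  exact (hmin₂ hx'K).trans hle

/-- Monotone comparative statics of minimizers in the storage dynamic program step. -/
theorem stmt2 (PO PI E : ℝ) (hPO : 0 ≤ PO) (hPI : 0 ≤ PI) (hE : 0 < E)
    (C G : ℝ → ℝ)
    (hC : ConvexOn ℝ (Icc (-PO) PI) C) (hCc : ContinuousOn C (Icc (-PO) PI))
    (hG : ConvexOn ℝ (Icc 0 E) G) (hGc : ContinuousOn G (Icc 0 E))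
    (s₁ s₂ : ℝ) (hs : s₁ ≤ s₂)
    (x₁ : ℝ) (hx₁ : x₁ ∈ Icc (-PO) PI) (hx₁' : s₁ + x₁ ∈ Icc 0 E)
    (hmin₁ : ∀ x ∈ Icc (-PO) PI, s₁ + x ∈ Icc 0 E →
      C x₁ + G (s₁ + x₁) ≤ C x + G (s₁ + x))
    (hfeas₂ : ∃ x ∈ Icc (-PO) PI, s₂ + x ∈ Icc 0 E) :
    ∃ x₂ ∈ Icc (-PO) PI, s₂ + x₂ ∈ Icc 0 E ∧
      (∀ x ∈ Icc (-PO) PI, s₂ + x ∈ Icc 0 E → C x₂ + G (s₂ + x₂) ≤ C x + G (s₂ + x)) ∧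
      x₂ ≤ x₁ ∧ s₁ + x₁ ≤ s₂ + x₂ :=
  stmt2_general PO PI E C G hC hCc hG hGc s₁ s₂ hs x₁ hx₁ hx₁' hmin₁ hfeas₂
end

section
/- Let C(x) = c_b·x for x ≥ 0 and C(x) = c_s·x for x < 0 with c_s ≤ c_b, defined on X = [−P_O, P_I]. Let G : [0,E] → ℝ be convex and continuous, and set s_b = argmin_{s∈[0,E]} [c_b·s + G(s)] and s_s = argmin_{s∈[0,E]} [c_s·s + G(s)] (choosing minimizers with s_b ≤ s_s, which is possible). Then for any current level s₀ ∈ [0,E], the function x ↦ C(x) + G(s₀+x) over {x ∈ X : s₀+x ∈ [0,E]} is minimized by: x = min(s_b − s₀, P_I) if s₀ < s_b; x = 0 if s_b ≤ s₀ ≤ s_s; and x = max(s_s − s₀, −P_O) if s₀ > s_s. -/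
open Set

lemma convMinBetween {E : ℝ} {f : ℝ → ℝ} (hf : ConvexOn ℝ (Icc 0 E) f)
    {m a b : ℝ} (hm : m ∈ Icc 0 E) (hb : b ∈ Icc 0 E)
    (hab : (m ≤ a ∧ a ≤ b) ∨ (b ≤ a ∧ a ≤ m))
    (hmb : f m ≤ f b) : f a ≤ f b := by
  have hseg : a ∈ segment ℝ m b := by
    rcases hab with ⟨h1, h2⟩ | ⟨h1, h2⟩
    · rw [segment_eq_Icc (h1.trans h2)]; exact ⟨h1, h2⟩
    · rw [segment_symm, segment_eq_Icc (h1.trans h2)]; exact ⟨h1, h2⟩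
  obtain ⟨t, u, ht, hu, htu, hz⟩ := hseg
  have h1 : f a ≤ t • f m + u • f b := by rw [← hz]; exact hf.2 hm hb ht hu htu
  simp only [smul_eq_mul] at h1
  have h2 : t * f m ≤ t * f b := mul_le_mul_of_nonneg_left hmb ht
  have h3 : t * f b + u * f b = f b := by rw [← add_mul, htu, one_mul]
  linarith

lemma linAddConvex {E : ℝ} {G : ℝ → ℝ} (hG : ConvexOn ℝ (Icc 0 E) G) (c : ℝ) :
    ConvexOn ℝ (Icc 0 E) (fun s => c * s + G s) := by
  have h1 : ConvexOn ℝ (Icc 0 E) (fun s => c * s) :=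
    ⟨convex_Icc 0 E, fun x _ y _ a b _ _ _ => by simp only [smul_eq_mul]; nlinarith⟩
  exact h1.add hG

/-- The target-interval policy is optimal in the price-taker case. -/
theorem stmt3 (PO PI E cb cs : ℝ) (hPO : 0 ≤ PO) (hPI : 0 ≤ PI) (hE : 0 < E)
    (hcs : cs ≤ cb) (G : ℝ → ℝ)
    (hG : ConvexOn ℝ (Icc 0 E) G) (hGc : ContinuousOn G (Icc 0 E))
    (C : ℝ → ℝ) (hCdef : ∀ x, C x = if 0 ≤ x then cb * x else cs * x)
    (sb ss : ℝ) (hsb : sb ∈ Icc 0 E) (hss : ss ∈ Icc 0 E) (hbs : sb ≤ ss)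
    (hsbmin : ∀ s ∈ Icc (0:ℝ) E, cb * sb + G sb ≤ cb * s + G s)
    (hssmin : ∀ s ∈ Icc (0:ℝ) E, cs * ss + G ss ≤ cs * s + G s)
    (s₀ : ℝ) (hs₀ : s₀ ∈ Icc 0 E) :
    ∀ xhat : ℝ, xhat = (if s₀ < sb then min (sb - s₀) PI
        else if s₀ ≤ ss then 0 else max (ss - s₀) (-PO)) →
      xhat ∈ Icc (-PO) PI ∧ s₀ + xhat ∈ Icc 0 E ∧
        ∀ x ∈ Icc (-PO) PI, s₀ + x ∈ Icc 0 E →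
          C xhat + G (s₀ + xhat) ≤ C x + G (s₀ + x) := by
  obtain ⟨hs₀0, hs₀E⟩ := hs₀
  obtain ⟨hsb0, hsbE⟩ := hsb
  obtain ⟨hss0, hssE⟩ := hss
  have hfb : ConvexOn ℝ (Icc 0 E) (fun s => cb * s + G s) := linAddConvex hG cb
  have hfs : ConvexOn ℝ (Icc 0 E) (fun s => cs * s + G s) := linAddConvex hG cs
  intro xhat hx
  split_ifs at hx with h1 h2
  · -- s₀ < sb, xhat = min (sb - s₀) PI
    have hx0 : 0 ≤ xhat := by rw [hx]; exact le_min (by linarith) hPI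
    have hxPI : xhat ≤ PI := by rw [hx]; exact min_le_right _ _
    have hxsb : s₀ + xhat ≤ sb := by
      have := min_le_left (sb - s₀) PI; rw [hx]; linarith
    have hmem : s₀ + xhat ∈ Icc 0 E := ⟨by linarith, by linarith⟩
    refine ⟨⟨by linarith, hxPI⟩, hmem, fun x ⟨hxl, hxr⟩ hsx => ?_⟩
    have hCx : cb * x ≤ C x := by
      rw [hCdef]; split_ifs with h
      · exact le_refl _
      · nlinarith [le_of_not_ge h]
    have hCxh : C xhat = cb * xhat := by rw [hCdef]; simp [hx0]
    have hkey : cb * (s₀ + xhat) + G (s₀ + xhat) ≤ cb * (s₀ + x) + G (s₀ + x) := by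
      refine convMinBetween hfb ⟨hsb0, hsbE⟩ hsx ?_ (hsbmin _ hsx)
      rcases le_or_gt x xhat with hc | hc
      · right; exact ⟨by linarith, hxsb⟩
      · left
        have : xhat = sb - s₀ := by
          rcases min_choice (sb - s₀) PI with h | h
          · rw [hx, h]
          · exfalso; rw [hx, h] at hc; linarith
        constructor <;> linarith
    rw [hCxh]; linarith
  · -- sb ≤ s₀ ≤ ss, xhat = 0
    push_neg at h1
    have hmem : s₀ + xhat ∈ Icc 0 E := by rw [hx]; simpa using ⟨hs₀0, hs₀E⟩
    refine ⟨by rw [hx]; exact ⟨by linarith, hPI⟩, hmem, fun x ⟨hxl, hxr⟩ hsx => ?_⟩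
    have hCxh : C xhat = 0 := by rw [hCdef, hx]; simp
    rw [hCxh, hx, add_zero, zero_add]
    rcases le_or_gt 0 x with hc | hc
    · have hCx : C x = cb * x := by rw [hCdef]; simp [hc]
      have hkey : cb * s₀ + G s₀ ≤ cb * (s₀ + x) + G (s₀ + x) :=
        convMinBetween hfb ⟨hsb0, hsbE⟩ hsx (Or.inl ⟨h1, by linarith⟩)
          (hsbmin _ hsx)
      rw [hCx]; linarith
    · have hCx : C x = cs * x := by rw [hCdef]; simp [not_le.mpr hc]
      have hkey : cs * s₀ + G s₀ ≤ cs * (s₀ + x) + G (s₀ + x) :=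
        convMinBetween hfs ⟨hss0, hssE⟩ hsx (Or.inr ⟨by linarith, h2⟩)
          (hssmin _ hsx)
      rw [hCx]; linarith
  · -- s₀ > ss, xhat = max (ss - s₀) (-PO)
    push_neg at h1 h2
    have hx0 : xhat ≤ 0 := by rw [hx]; exact max_le (by linarith) (by linarith)
    have hxPO : -PO ≤ xhat := by rw [hx]; exact le_max_right _ _
    have hxss : ss ≤ s₀ + xhat := by
      have := le_max_left (ss - s₀) (-PO); rw [hx]; linarith
    have hmem : s₀ + xhat ∈ Icc 0 E := ⟨by linarith, by linarith⟩
    refine ⟨⟨hxPO, by linarith⟩, hmem, fun x ⟨hxl, hxr⟩ hsx => ?_⟩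
    have hCx : cs * x ≤ C x := by
      rw [hCdef]; split_ifs with h
      · nlinarith
      · exact le_refl _
    have hCxh : C xhat = cs * xhat := by
      rw [hCdef]; split_ifs with h
      · have : xhat = 0 := le_antisymm hx0 h; rw [this]; ring
      · rfl
    have hkey : cs * (s₀ + xhat) + G (s₀ + xhat) ≤ cs * (s₀ + x) + G (s₀ + x) := by
      refine convMinBetween hfs ⟨hss0, hssE⟩ hsx ?_ (hssmin _ hsx)
      rcases le_or_gt xhat x with hc | hc
      · left; exact ⟨hxss, by linarith⟩
      · right
        have : xhat = ss - s₀ := by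
          rcases max_choice (ss - s₀) (-PO) with h | h
          · rw [hx, h]
          · exfalso; rw [hx, h] at hc; linarith
        constructor <;> linarith
    rw [hCxh]; linarith
end

section
/- Equivalence of the Lagrangian condition and per-period minimization: assume each A_t is convex and differentiable and each C_t is convex, s* is feasible for problem P, and the pair (s*, λ*) satisfies complementary slackness (λ*_t = 0 if 0 < s*_t < E_t, λ*_t ≥ 0 if s*_t = 0, λ*_t ≤ 0 if s*_t = E_t). Define ν*_t = ∑_{u=t}^T [λ*_u − A'_u(s*_u)]. Then the Lagrangian saddle condition — for all s with s_0 = s*_0 and s_t − s_{t-1} ∈ X_t for all t, ∑_t [C_t(s_t−s_{t-1}) + A_t(s_t) − λ*_t s_t] ≥ ∑_t [C_t(s*_t−s*_{t-1}) + A_t(s*_t) − λ*_t s*_t] — holds if and only if for every t, x = s*_t − s*_{t-1} minimizes C_t(x) − ν*_t x over x ∈ X_t. -/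
open Set

/-!
Write `x_t = s_t - s_{t-1}`. Raising `s*` by `ε h` from period `t` on, with `h = x - x*_t`,
changes only the increment `x_t` and the states `s_u` with `u ≥ t`. By convexity of `C_t` the
resulting change of the Lagrangian is at most `ε (C_t x - C_t x*_t)` plus a differentiable
function of `ε` whose derivative at `0` is `-ν*_t h`; minimality at `ε = 0` gives the per-period
inequality. Conversely, add up the per-period inequalities and the tangent-line inequalities of
the `A_t` at `s*_t`: since `ν*_t` is the tail sum of `λ*_u - A'_u(s*_u)` and `s_0 = s*_0`, the
linear terms cancel by Abel summation.
-/

theorem ConvexOn.apply_add_mul_sub_le {S : Set ℝ} {f : ℝ → ℝ} {x y ε : ℝ}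
    (hf : ConvexOn ℝ S f) (hx : x ∈ S) (hy : y ∈ S) (hε : ε ∈ Icc 0 1) :
    f (x + ε * (y - x)) ≤ f x + ε * (f y - f x) := by
  have := hf.2 hx hy (sub_nonneg.2 hε.2) hε.1 (sub_add_cancel 1 ε)
  simp only [smul_eq_mul] at this
  calc f (x + ε * (y - x)) = f ((1 - ε) * x + ε * y) := by ring_nf
    _ ≤ (1 - ε) * f x + ε * f y := this
    _ = f x + ε * (f y - f x) := by ring

theorem ConvexOn.add_deriv_mul_sub_le {S : Set ℝ} {f : ℝ → ℝ} {f' x y : ℝ}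
    (hf : ConvexOn ℝ S f) (hx : x ∈ S) (hy : y ∈ S) (hd : HasDerivAt f f' x) :
    f x + f' * (y - x) ≤ f y := by
  rcases lt_trichotomy x y with hxy | rfl | hyx
  · have := hf.le_slope_of_hasDerivAt hx hy hxy hd
    rw [slope_def_field, le_div_iff₀ (sub_pos.2 hxy)] at this
    linarith
  · simp
  · have := hf.slope_le_of_hasDerivAt hy hx hyx hd
    rw [slope_def_field, div_le_iff₀ (sub_pos.2 hyx)] at this
    linarith

theorem Finset.sum_Icc_sub_pred {G : Type*} [AddCommGroup G] (δ : ℕ → G) (n : ℕ) :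
    ∑ v ∈ Icc 1 n, (δ v - δ (v - 1)) = δ n - δ 0 := by
  induction n with
  | zero => simp
  | succ n ih =>
    rw [sum_Icc_succ_top (by omega), ih, Nat.add_sub_cancel]
    abel

theorem Finset.sum_Icc_tail_mul_sub_pred {R : Type*} [CommRing R] (g δ : ℕ → R) (T : ℕ) :
    ∑ t ∈ Icc 1 T, (∑ u ∈ Icc t T, g u) * (δ t - δ (t - 1)) =
      ∑ u ∈ Icc 1 T, g u * (δ u - δ 0) := by
  simp_rw [sum_mul]
  rw [sum_comm' (t' := Icc 1 T) (s' := fun u => Icc 1 u) (by intros; simp only [mem_Icc]; omega)]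
  simp_rw [← mul_sum, sum_Icc_sub_pred]

theorem IsMinOn.hasDerivAt_nonneg_of_Icc {φ : ℝ → ℝ} {a b D : ℝ} (hab : a < b)
    (hmin : IsMinOn φ (Icc a b) a) (hd : HasDerivAt φ D a) : 0 ≤ D := by
  have hcone : b - a ∈ posTangentConeAt (Icc a b) a :=
    sub_mem_posTangentConeAt_of_segment_subset (segment_subset_Icc hab.le)
  have := hmin.localize.hasFDerivWithinAt_nonneg hd.hasFDerivAt.hasFDerivWithinAt hcone
  simp only [ContinuousLinearMap.toSpanSingleton_apply, smul_eq_mul] at this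
  exact nonneg_of_mul_nonneg_right this (sub_pos.2 hab)

def lagrangian (T : ℕ) (C A : ℕ → ℝ → ℝ) (lam s : ℕ → ℝ) : ℝ :=
  ∑ t ∈ Finset.Icc 1 T, (C t (s t - s (t - 1)) + A t (s t) - lam t * s t)

def raiseFrom (t : ℕ) (h : ℝ) (s : ℕ → ℝ) (u : ℕ) : ℝ :=
  if t ≤ u then s u + h else s u

section raiseFrom
variable {t u : ℕ} {h : ℝ} {s : ℕ → ℝ}

theorem raiseFrom_zero (ht : 1 ≤ t) : raiseFrom t h s 0 = s 0 := by
  simp [raiseFrom, Nat.one_le_iff_ne_zero.1 ht]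

theorem raiseFrom_sub_pred (hu : 1 ≤ u) :
    raiseFrom t h s u - raiseFrom t h s (u - 1) = s u - s (u - 1) + if u = t then h else 0 := by
  unfold raiseFrom
  split_ifs <;> first | omega | ring

theorem lagrangian_raiseFrom_sub {T : ℕ} (C A : ℕ → ℝ → ℝ) (lam : ℕ → ℝ)
    (ht : t ∈ Finset.Icc 1 T) :
    lagrangian T C A lam (raiseFrom t h s) - lagrangian T C A lam s =
      C t (s t - s (t - 1) + h) - C t (s t - s (t - 1)) +
        ∑ u ∈ Finset.Icc t T,
          (A u (s u + h) - lam u * (s u + h) - (A u (s u) - lam u * s u)) := by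
  have hsplit : ∀ u ∈ Finset.Icc 1 T,
      C u (raiseFrom t h s u - raiseFrom t h s (u - 1)) + A u (raiseFrom t h s u) -
          lam u * raiseFrom t h s u - (C u (s u - s (u - 1)) + A u (s u) - lam u * s u) =
        (if u = t then C t (s t - s (t - 1) + h) - C t (s t - s (t - 1)) else 0) +
          if t ≤ u then A u (s u + h) - lam u * (s u + h) - (A u (s u) - lam u * s u) else 0 := by
    intro u hu
    rw [raiseFrom_sub_pred (Finset.mem_Icc.1 hu).1, raiseFrom]
    rcases eq_or_ne u t with rfl | hut
    · simp only [↓reduceIte, le_refl]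
      ring
    · simp only [hut, ↓reduceIte, add_zero, zero_add]
      split_ifs <;> ring
  have hfilter : (Finset.Icc 1 T).filter (t ≤ ·) = Finset.Icc t T := by
    ext u; simp only [Finset.mem_filter, Finset.mem_Icc] at ht ⊢; omega
  rw [lagrangian, lagrangian, ← Finset.sum_sub_distrib, Finset.sum_congr rfl hsplit,
    Finset.sum_add_distrib, Finset.sum_ite_eq' _ _ , if_pos ht, ← Finset.sum_filter, hfilter]

end raiseFrom

theorem increment_sub_mul_le_of_lagrangian_le {T t : ℕ} {PO PI : ℕ → ℝ}
    {C A A' : ℕ → ℝ → ℝ} {lam sstar : ℕ → ℝ} {ν x : ℝ}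
    (hC : ConvexOn ℝ (Icc (-(PO t)) (PI t)) (C t))
    (hA' : ∀ u y, HasDerivAt (A u) (A' u y) y)
    (hfeas : ∀ u ∈ Finset.Icc 1 T, sstar u - sstar (u - 1) ∈ Icc (-(PO u)) (PI u))
    (hsaddle : ∀ s : ℕ → ℝ, s 0 = sstar 0 →
      (∀ u ∈ Finset.Icc 1 T, s u - s (u - 1) ∈ Icc (-(PO u)) (PI u)) →
      lagrangian T C A lam sstar ≤ lagrangian T C A lam s)
    (ht : t ∈ Finset.Icc 1 T) (hν : ν = ∑ u ∈ Finset.Icc t T, (lam u - A' u (sstar u)))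
    (hx : x ∈ Icc (-(PO t)) (PI t)) :
    C t (sstar t - sstar (t - 1)) - ν * (sstar t - sstar (t - 1)) ≤ C t x - ν * x := by
  set xs := sstar t - sstar (t - 1)
  set h := x - xs
  set ψ : ℝ → ℝ := fun ε =>
    ∑ u ∈ Finset.Icc t T, (A u (sstar u + ε * h) - lam u * (sstar u + ε * h)) with hψ_def
  have hψ : HasDerivAt ψ (-(ν * h)) 0 := by
    rw [hν, Finset.sum_mul, ← Finset.sum_neg_distrib]
    refine HasDerivAt.fun_sum fun u _ => ?_
    have hline : HasDerivAt (fun ε : ℝ => sstar u + ε * h) h 0 :=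
      (hasDerivAt_mul_const h).const_add _
    exact (((hA' u (sstar u)).comp_of_eq 0 hline (by simp)).sub
      (hline.const_mul (lam u))).congr_deriv (by ring)
  have hmin : IsMinOn (fun ε => ε * (C t x - C t xs) + ψ ε) (Icc 0 1) 0 := by
    refine isMinOn_iff.2 fun ε hε => ?_
    have hmem : xs + ε * h ∈ Icc (-(PO t)) (PI t) := by
      simpa using (convex_Icc _ _).add_smul_sub_mem (hfeas t ht) hx hε
    have hL := hsaddle (raiseFrom t (ε * h) sstar) (raiseFrom_zero (Finset.mem_Icc.1 ht).1)
      fun u hu => by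
        rw [raiseFrom_sub_pred (Finset.mem_Icc.1 hu).1]
        split_ifs with hut
        · exact hut ▸ hmem
        · simpa using hfeas u hu
    rw [← sub_nonneg, lagrangian_raiseFrom_sub C A lam ht, Finset.sum_sub_distrib] at hL
    have hCle := hC.apply_add_mul_sub_le (hfeas t ht) hx hε
    simp only [hψ_def, zero_mul, add_zero]
    linarith
  have hD := hmin.hasDerivAt_nonneg_of_Icc zero_lt_one ((hasDerivAt_mul_const _).add hψ)
  have : ν * h = ν * x - ν * xs := mul_sub ν x xs
  linarith

theorem lagrangian_le_of_increment_sub_mul_le {T : ℕ} {PO PI : ℕ → ℝ}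
    {C A A' : ℕ → ℝ → ℝ} {lam sstar nu s : ℕ → ℝ}
    (hA : ∀ t, ConvexOn ℝ univ (A t))
    (hA' : ∀ t y, HasDerivAt (A t) (A' t y) y)
    (hnu : ∀ t, nu t = ∑ u ∈ Finset.Icc t T, (lam u - A' u (sstar u)))
    (hmin : ∀ t ∈ Finset.Icc 1 T, ∀ x ∈ Icc (-(PO t)) (PI t),
      C t (sstar t - sstar (t - 1)) - nu t * (sstar t - sstar (t - 1)) ≤ C t x - nu t * x)
    (hs0 : s 0 = sstar 0)
    (hs : ∀ t ∈ Finset.Icc 1 T, s t - s (t - 1) ∈ Icc (-(PO t)) (PI t)) :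
    lagrangian T C A lam sstar ≤ lagrangian T C A lam s := by
  have habel : ∑ t ∈ Finset.Icc 1 T, nu t * ((s t - s (t - 1)) - (sstar t - sstar (t - 1))) =
      ∑ t ∈ Finset.Icc 1 T, (lam t - A' t (sstar t)) * (s t - sstar t) := by
    simpa [hnu, hs0, sub_sub_sub_comm] using
      Finset.sum_Icc_tail_mul_sub_pred (fun u => lam u - A' u (sstar u)) (s - sstar) T
  have hterm : ∀ t ∈ Finset.Icc 1 T,
      C t (sstar t - sstar (t - 1)) + A t (sstar t) - lam t * sstar t +
          (nu t * ((s t - s (t - 1)) - (sstar t - sstar (t - 1))) -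
            (lam t - A' t (sstar t)) * (s t - sstar t)) ≤
        C t (s t - s (t - 1)) + A t (s t) - lam t * s t := by
    intro t ht
    have hC := hmin t ht _ (hs t ht)
    have hA := (hA t).add_deriv_mul_sub_le trivial trivial (hA' t (sstar t)) (y := s t)
    linarith
  calc lagrangian T C A lam sstar
      = lagrangian T C A lam sstar +
          (∑ t ∈ Finset.Icc 1 T, nu t * ((s t - s (t - 1)) - (sstar t - sstar (t - 1))) -
            ∑ t ∈ Finset.Icc 1 T, (lam t - A' t (sstar t)) * (s t - sstar t)) := by
        rw [habel, sub_self, add_zero]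
    _ ≤ lagrangian T C A lam s := by
        rw [lagrangian, lagrangian, ← Finset.sum_sub_distrib, ← Finset.sum_add_distrib]
        exact Finset.sum_le_sum hterm

theorem stmt8_general (T : ℕ) (PO PI E : ℕ → ℝ) (C A A' : ℕ → ℝ → ℝ)
    (hC : ∀ t, ConvexOn ℝ (Icc (-(PO t)) (PI t)) (C t))
    (hA : ∀ t, ConvexOn ℝ Set.univ (A t))
    (hA' : ∀ t x, HasDerivAt (A t) (A' t x) x)
    (sstar lam : ℕ → ℝ)
    (hfeas : ∀ t ∈ Finset.Icc 1 T, sstar t ∈ Icc 0 (E t) ∧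
      sstar t - sstar (t-1) ∈ Icc (-(PO t)) (PI t))
    (nu : ℕ → ℝ)
    (hnu : ∀ t, nu t = ∑ u ∈ Finset.Icc t T, (lam u - A' u (sstar u))) :
    (∀ s : ℕ → ℝ, s 0 = sstar 0 →
      (∀ t ∈ Finset.Icc 1 T, s t - s (t-1) ∈ Icc (-(PO t)) (PI t)) →
      ∑ t ∈ Finset.Icc 1 T,
          (C t (sstar t - sstar (t-1)) + A t (sstar t) - lam t * sstar t) ≤
      ∑ t ∈ Finset.Icc 1 T, (C t (s t - s (t-1)) + A t (s t) - lam t * s t))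
    ↔
    (∀ t ∈ Finset.Icc 1 T, ∀ x ∈ Icc (-(PO t)) (PI t),
      C t (sstar t - sstar (t-1)) - nu t * (sstar t - sstar (t-1)) ≤
        C t x - nu t * x) :=
  ⟨fun hsaddle t ht _ hx => increment_sub_mul_le_of_lagrangian_le (hC t) hA'
      (fun u hu => (hfeas u hu).2) hsaddle ht (hnu t) hx,
    fun hmin _ hs0 hs => lagrangian_le_of_increment_sub_mul_le hA hA' hnu hmin hs0 hs⟩

/-- Equivalence of the Lagrangian saddle condition and per-period minimization. -/
theorem stmt8 (T : ℕ) (PO PI E : ℕ → ℝ) (C A A' : ℕ → ℝ → ℝ)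
    (hC : ∀ t, ConvexOn ℝ (Icc (-(PO t)) (PI t)) (C t))
    (hA : ∀ t, ConvexOn ℝ Set.univ (A t))
    (hA' : ∀ t x, HasDerivAt (A t) (A' t x) x)
    (sstar lam : ℕ → ℝ)
    (hfeas : ∀ t ∈ Finset.Icc 1 T, sstar t ∈ Icc 0 (E t) ∧
      sstar t - sstar (t-1) ∈ Icc (-(PO t)) (PI t))
    (hcs : ∀ t ∈ Finset.Icc 1 T,
      (0 < sstar t ∧ sstar t < E t → lam t = 0) ∧
      (sstar t = 0 → 0 ≤ lam t) ∧ (sstar t = E t → lam t ≤ 0))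
    (nu : ℕ → ℝ)
    (hnu : ∀ t, nu t = ∑ u ∈ Finset.Icc t T, (lam u - A' u (sstar u))) :
    (∀ s : ℕ → ℝ, s 0 = sstar 0 →
      (∀ t ∈ Finset.Icc 1 T, s t - s (t-1) ∈ Icc (-(PO t)) (PI t)) →
      ∑ t ∈ Finset.Icc 1 T,
          (C t (sstar t - sstar (t-1)) + A t (sstar t) - lam t * sstar t) ≤
      ∑ t ∈ Finset.Icc 1 T, (C t (s t - s (t-1)) + A t (s t) - lam t * s t))
    ↔
    (∀ t ∈ Finset.Icc 1 T, ∀ x ∈ Icc (-(PO t)) (PI t),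
      C t (sstar t - sstar (t-1)) - nu t * (sstar t - sstar (t-1)) ≤
        C t x - nu t * x) :=
  stmt8_general T PO PI E C A A' hC hA hA' sstar lam hfeas nu hnu
end

section
/- In the one-dimensional search of the storage algorithm, the set M of initial trial values ν₁ for which the generated trajectory first violates the capacity constraints from below (s_t(ν₁) < 0 before ever exceeding any E_t) is a down-set (ν₁ ∈ M and ν'₁ < ν₁ implies ν'₁ ∈ M), and the set M' of trial values for which it first violates from above (s_t(ν₁) > E_t before ever going below 0) is an up-set; moreover M and M' are disjoint. -/
open Set

/-- The set `M` of trial values whose trajectory first violates the capacity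
constraints from below is a down-set, the set `M'` of those first violating from
above is an up-set, and `M` and `M'` are disjoint. -/
theorem stmt12 (T : ℕ) (PO PI E : ℕ → ℝ) (hE : ∀ t, 0 < E t)
    (xstar : ℕ → ℝ → ℝ) (hxmono : ∀ t, Monotone (xstar t))
    (hxcont : ∀ t, Continuous (xstar t))
    (hxrange : ∀ t ν, xstar t ν ∈ Icc (-(PO t)) (PI t))
    (A' : ℕ → ℝ → ℝ) (hA'mono : ∀ t, Monotone (A' t))
    (s0 : ℝ) (S N : ℝ → ℕ → ℝ)
    (hS0 : ∀ v, S v 0 = s0) (hN1 : ∀ v, N v 1 = v)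
    (hS : ∀ v t, 1 ≤ t → t ≤ T → S v t = S v (t-1) + xstar t (N v t))
    (hN : ∀ v t, 1 ≤ t → t ≤ T → N v (t+1) = N v t + A' t (S v t))
    (M M' : Set ℝ)
    (hM : ∀ v, v ∈ M ↔ ∃ τ, 1 ≤ τ ∧ τ ≤ T ∧ S v τ < 0 ∧
      ∀ t, 1 ≤ t → t < τ → 0 ≤ S v t ∧ S v t ≤ E t)
    (hM' : ∀ v, v ∈ M' ↔ ∃ τ, 1 ≤ τ ∧ τ ≤ T ∧ E τ < S v τ ∧
      ∀ t, 1 ≤ t → t < τ → 0 ≤ S v t ∧ S v t ≤ E t) :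
    (∀ v v' : ℝ, v ∈ M → v' ≤ v → v' ∈ M) ∧
    (∀ v v' : ℝ, v ∈ M' → v ≤ v' → v' ∈ M') ∧
    Disjoint M M' := by
  classical
  have key : ∀ (v v' : ℝ), v' ≤ v → ∀ t,
      ((1 ≤ t → t ≤ T → N v' t ≤ N v t) ∧ (t ≤ T → S v' t ≤ S v t)) := by
    intro v v' hvv t
    induction t with
    | zero => exact ⟨fun h => absurd h (by omega), fun _ => by rw [hS0, hS0]⟩
    | succ t ih =>
      have hNstep : 1 ≤ t+1 → t+1 ≤ T → N v' (t+1) ≤ N v (t+1) := by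
        intro _ hT
        rcases Nat.eq_zero_or_pos t with h0 | h1
        · subst h0; rw [hN1, hN1]; exact hvv
        · rw [hN v t h1 (by omega), hN v' t h1 (by omega)]
          exact add_le_add (ih.1 h1 (by omega)) (hA'mono t (ih.2 (by omega)))
      refine ⟨hNstep, fun hT => ?_⟩
      rw [hS v (t+1) (by omega) hT, hS v' (t+1) (by omega) hT]
      simp only [Nat.add_sub_cancel]
      exact add_le_add (ih.2 (by omega)) (hxmono (t+1) (hNstep (by omega) hT))
  refine ⟨?_, ?_, ?_⟩
  · intro v v' hv hle
    rw [hM] at hv ⊢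
    obtain ⟨τ, hτ1, hτT, hneg, hok⟩ := hv
    have hSle : ∀ t, t ≤ T → S v' t ≤ S v t := fun t ht => ((key v v' hle t).2 ht)
    have hne : ∃ t, 1 ≤ t ∧ t ≤ τ ∧ (S v' t < 0 ∨ E t < S v' t) :=
      ⟨τ, hτ1, le_refl _, Or.inl (lt_of_le_of_lt (hSle τ hτT) hneg)⟩
    set τ' := Nat.find hne with hτ'def
    obtain ⟨h1', hle', hbad⟩ := Nat.find_spec hne
    have hτ'T : τ' ≤ T := le_trans hle' hτT
    have hbelow : S v' τ' < 0 := by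
      rcases hbad with h | h
      · exact h
      · exfalso
        rcases lt_or_eq_of_le hle' with hlt | heq
        · exact absurd (lt_of_lt_of_le h (le_trans (hSle τ' hτ'T) (hok τ' h1' hlt).2))
            (lt_irrefl _)
        · rw [heq] at h
          exact absurd (lt_trans h (lt_of_le_of_lt (hSle τ hτT) hneg)) (not_lt.2 (le_of_lt (hE τ)))
    refine ⟨τ', h1', hτ'T, hbelow, fun t ht1 htlt => ?_⟩
    have := Nat.find_min hne htlt
    push_neg at this
    have h3 := this ht1 (le_trans (le_of_lt htlt) hle')
    exact ⟨h3.1, h3.2⟩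
  · intro v v' hv hle
    rw [hM'] at hv ⊢
    obtain ⟨τ, hτ1, hτT, hpos, hok⟩ := hv
    have hSle : ∀ t, t ≤ T → S v t ≤ S v' t := fun t ht => ((key v' v hle t).2 ht)
    have hne : ∃ t, 1 ≤ t ∧ t ≤ τ ∧ (S v' t < 0 ∨ E t < S v' t) :=
      ⟨τ, hτ1, le_refl _, Or.inr (lt_of_lt_of_le hpos (hSle τ hτT))⟩
    set τ' := Nat.find hne with hτ'def
    obtain ⟨h1', hle', hbad⟩ := Nat.find_spec hne
    have hτ'T : τ' ≤ T := le_trans hle' hτT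
    have habove : E τ' < S v' τ' := by
      rcases hbad with h | h
      · exfalso
        rcases lt_or_eq_of_le hle' with hlt | heq
        · exact absurd (lt_of_le_of_lt (le_trans (hok τ' h1' hlt).1 (hSle τ' hτ'T)) h)
            (lt_irrefl _)
        · rw [heq] at h
          have : E τ < S v' τ := lt_of_lt_of_le hpos (hSle τ hτT)
          exact absurd (lt_trans (hE τ) (lt_trans this h)) (lt_irrefl _)
      · exact h
    refine ⟨τ', h1', hτ'T, habove, fun t ht1 htlt => ?_⟩
    have := Nat.find_min hne htlt
    push_neg at this
    have h3 := this ht1 (le_trans (le_of_lt htlt) hle')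
    exact ⟨h3.1, h3.2⟩
  · rw [Set.disjoint_left]
    intro v hvM hvM'
    rw [hM] at hvM
    rw [hM'] at hvM'
    obtain ⟨τ, hτ1, hτT, hneg, hok⟩ := hvM
    obtain ⟨τ', hτ'1, hτ'T, hpos, hok'⟩ := hvM'
    rcases lt_trichotomy τ τ' with h | h | h
    · exact absurd (hok' τ hτ1 h).1 (not_le.2 hneg)
    · subst h
      exact absurd (lt_trans (hE τ) (lt_trans hpos hneg)) (lt_irrefl _)
    · exact absurd (hok τ' hτ'1 h).2 (not_le.2 hpos)
end

section
/- If C is increasing and convex on an interval X containing 0, and 0 < η ≤ 1, then the function C̃ defined by C̃(x) = C(x) for x ≥ 0 and C̃(x) = η·C(x) for x < 0 is convex on X. -/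
open Set

/-- Scaling the negative part of an increasing convex cost function by a
round-trip efficiency `η ≤ 1` preserves convexity. -/
theorem stmt13 (PO PI η : ℝ) (hPO : 0 ≤ PO) (hPI : 0 ≤ PI)
    (hη0 : 0 < η) (hη1 : η ≤ 1)
    (C : ℝ → ℝ) (hC : ConvexOn ℝ (Icc (-PO) PI) C)
    (hmono : MonotoneOn C (Icc (-PO) PI)) (hC0 : C 0 = 0) :
    ConvexOn ℝ (Icc (-PO) PI) (fun x => if 0 ≤ x then C x else η * C x) := by
  have h0 : (0 : ℝ) ∈ Icc (-PO) PI := ⟨by linarith, hPI⟩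
  have hsmul : ConvexOn ℝ (Icc (-PO) PI) (fun x => η * C x) := by
    simpa [smul_eq_mul] using hC.smul hη0.le
  have hmax : ConvexOn ℝ (Icc (-PO) PI) (fun x => max (C x) (η * C x)) :=
    hC.sup hsmul
  -- the piecewise function agrees with the max on the interval
  have heq : ∀ z ∈ Icc (-PO) PI,
      (if 0 ≤ z then C z else η * C z) = max (C z) (η * C z) := by
    intro z hz
    by_cases hz0 : 0 ≤ z
    · have hCz : 0 ≤ C z := by
        have := hmono h0 hz hz0
        linarith [hC0]
      simp [hz0, max_eq_left]
      nlinarith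
    · have hCz : C z ≤ 0 := by
        have := hmono hz h0 (le_of_not_ge hz0)
        linarith [hC0]
      simp [hz0, max_eq_right]
      nlinarith
  refine ⟨hmax.1, fun x hx y hy a b ha hb hab => ?_⟩
  have hxy : a • x + b • y ∈ Icc (-PO) PI := hmax.1 hx hy ha hb hab
  have h := hmax.2 hx hy ha hb hab
  simp only [smul_eq_mul] at h ⊢
  rw [heq x hx, heq y hy, heq (a * x + b * y) (by simpa using hxy)]
  exact h
end

section
/- Subgradient characterization used in the algorithm: suppose s* is feasible for problem P, each A_t is convex and differentiable, each C_t is convex, and ν* = (ν*_1,…,ν*_T) satisfies, for each t, that x = s*_t − s*_{t-1} minimizes C_t(x) − ν*_t x over X_t. Define λ*_t = ν*_t − ν*_{t+1} + A'_t(s*_t) for t < T and λ*_T = ν*_T + A'_T(s*_T). If in addition λ*_t = 0 whenever 0 < s*_t < E_t, λ*_t ≥ 0 whenever s*_t = 0, and λ*_t ≤ 0 whenever s*_t = E_t, then s* solves problem P. -/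
open Set

lemma grad_ineq {f f' : ℝ → ℝ} (hf : ConvexOn ℝ Set.univ f)
    (hd : ∀ x, HasDerivAt f (f' x) x) (a b : ℝ) :
    f a + f' a * (b - a) ≤ f b := by
  rcases lt_trichotomy a b with h | h | h
  · have := hf.le_slope_of_hasDerivAt (mem_univ a) (mem_univ b) h (hd a)
    rw [slope_def_field] at this
    have h' : b - a > 0 := sub_pos.2 h
    have := (le_div_iff₀ h').1 this
    linarith
  · simp [h]
  · have := hf.slope_le_of_hasDerivAt (mem_univ b) (mem_univ a) h (hd a)
    rw [slope_def_field] at this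
    have h' : a - b > 0 := sub_pos.2 h
    have := (div_le_iff₀ h').1 this
    nlinarith

lemma abel_tel (nu d : ℕ → ℝ) (T : ℕ) (hd0 : d 0 = 0) :
    ∑ t ∈ Finset.Icc 1 T, (nu t * (d t - d (t-1)) + (nu (t+1) - nu t) * d t)
      = nu (T+1) * d T := by
  have h1 : Finset.Icc 1 T = Finset.Ico 1 (T+1) := by
    ext x; simp [Nat.lt_succ_iff]
  rw [h1, Finset.sum_Ico_eq_sum_range]
  have h2 : ∀ i ∈ Finset.range (T + 1 - 1),
      (nu (1+i) * (d (1+i) - d ((1+i)-1)) + (nu ((1+i)+1) - nu (1+i)) * d (1+i))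
        = (fun j => nu (j+1) * d j) (i+1) - (fun j => nu (j+1) * d j) i := by
    intro i _
    have : (1+i) - 1 = i := by omega
    rw [this]
    have : 1 + i = i + 1 := by omega
    rw [this]
    ring
  rw [Finset.sum_congr rfl h2, Finset.sum_range_sub (fun j => nu (j+1) * d j)]
  simp [hd0]

/-- Per-period minimization plus complementary slackness implies global optimality
for problem P. -/
theorem stmt17 (T : ℕ) (hT : 1 ≤ T) (PO PI E : ℕ → ℝ) (C A A' : ℕ → ℝ → ℝ)
    (hC : ∀ t, ConvexOn ℝ (Icc (-(PO t)) (PI t)) (C t))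
    (hA : ∀ t, ConvexOn ℝ Set.univ (A t))
    (hA' : ∀ t x, HasDerivAt (A t) (A' t x) x)
    (sstar : ℕ → ℝ)
    (hfeas : ∀ t ∈ Finset.Icc 1 T, sstar t ∈ Icc 0 (E t) ∧
      sstar t - sstar (t-1) ∈ Icc (-(PO t)) (PI t))
    (nu : ℕ → ℝ)
    (hmin : ∀ t ∈ Finset.Icc 1 T, ∀ x ∈ Icc (-(PO t)) (PI t),
      C t (sstar t - sstar (t-1)) - nu t * (sstar t - sstar (t-1)) ≤
        C t x - nu t * x)
    (lam : ℕ → ℝ)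
    (hlam : ∀ t, 1 ≤ t → t < T → lam t = nu t - nu (t+1) + A' t (sstar t))
    (hlamT : lam T = nu T + A' T (sstar T))
    (hcs : ∀ t ∈ Finset.Icc 1 T,
      (0 < sstar t ∧ sstar t < E t → lam t = 0) ∧
      (sstar t = 0 → 0 ≤ lam t) ∧ (sstar t = E t → lam t ≤ 0)) :
    ∀ s : ℕ → ℝ, s 0 = sstar 0 →
      (∀ t ∈ Finset.Icc 1 T, s t ∈ Icc 0 (E t) ∧ s t - s (t-1) ∈ Icc (-(PO t)) (PI t)) →
      ∑ t ∈ Finset.Icc 1 T, (C t (sstar t - sstar (t-1)) + A t (sstar t)) ≤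
      ∑ t ∈ Finset.Icc 1 T, (C t (s t - s (t-1)) + A t (s t)) := by
  intro s hs0 hsfeas
  set d : ℕ → ℝ := fun t => s t - sstar t with hd
  have hd0 : d 0 = 0 := by simp [hd, hs0]
  -- per-term inequality
  have h1 : ∀ t ∈ Finset.Icc 1 T,
      (C t (sstar t - sstar (t-1)) + A t (sstar t))
        + (nu t * (d t - d (t-1)) + A' t (sstar t) * d t)
        ≤ C t (s t - s (t-1)) + A t (s t) := by
    intro t ht
    have hCineq := hmin t ht (s t - s (t-1)) (hsfeas t ht).2
    have hAineq := grad_ineq (hA t) (hA' t) (sstar t) (s t)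
    have heq : nu t * (d t - d (t-1))
        = nu t * (s t - s (t-1)) - nu t * (sstar t - sstar (t-1)) := by
      simp only [hd]; ring
    have heq2 : A' t (sstar t) * d t = A' t (sstar t) * (s t - sstar t) := by
      simp only [hd]
    linarith
  have hsum1 := Finset.sum_le_sum h1
  rw [Finset.sum_add_distrib] at hsum1
  -- nonnegativity of the correction term
  have hlampos : ∀ t ∈ Finset.Icc 1 T, 0 ≤ lam t * d t := by
    intro t ht
    obtain ⟨⟨hs1, hs2⟩, -⟩ := hfeas t ht
    obtain ⟨⟨hs1', hs2'⟩, -⟩ := hsfeas t ht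
    obtain ⟨hc1, hc2, hc3⟩ := hcs t ht
    rcases eq_or_lt_of_le hs1 with h0 | h0
    · have := hc2 h0.symm
      have hdt : 0 ≤ d t := by simp [hd, ← h0]; linarith
      positivity
    · rcases eq_or_lt_of_le hs2 with hE | hE
      · have hl := hc3 hE
        have hdt : d t ≤ 0 := by simp [hd, hE]; linarith
        nlinarith
      · simp [hc1 ⟨h0, hE⟩]
  -- Abel summation identity
  have habel := abel_tel nu d T hd0
  have hTmem : T ∈ Finset.Icc 1 T := by simp [hT]
  have hkey : ∑ t ∈ Finset.Icc 1 T, (nu t * (d t - d (t-1)) + A' t (sstar t) * d t)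
      = ∑ t ∈ Finset.Icc 1 T, lam t * d t := by
    have split : ∀ t, nu t * (d t - d (t-1)) + A' t (sstar t) * d t
        = (nu t * (d t - d (t-1)) + (nu (t+1) - nu t) * d t)
          + (nu t - nu (t+1) + A' t (sstar t)) * d t := by intro t; ring
    calc ∑ t ∈ Finset.Icc 1 T, (nu t * (d t - d (t-1)) + A' t (sstar t) * d t)
        = ∑ t ∈ Finset.Icc 1 T, ((nu t * (d t - d (t-1)) + (nu (t+1) - nu t) * d t)
          + (nu t - nu (t+1) + A' t (sstar t)) * d t) := by
          exact Finset.sum_congr rfl (fun t _ => split t)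
      _ = nu (T+1) * d T
          + ∑ t ∈ Finset.Icc 1 T, (nu t - nu (t+1) + A' t (sstar t)) * d t := by
          rw [Finset.sum_add_distrib, habel]
      _ = nu (T+1) * d T
          + (∑ t ∈ (Finset.Icc 1 T).erase T, (nu t - nu (t+1) + A' t (sstar t)) * d t
            + (nu T - nu (T+1) + A' T (sstar T)) * d T) := by
          rw [Finset.sum_erase_add _ _ hTmem]
      _ = ∑ t ∈ (Finset.Icc 1 T).erase T, lam t * d t + lam T * d T := by
          rw [Finset.sum_congr rfl (fun t ht => ?_), hlamT]
          · ring
          · obtain ⟨hne, hmem⟩ := Finset.mem_erase.1 ht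
            obtain ⟨h1t, h2t⟩ := Finset.mem_Icc.1 hmem
            rw [hlam t h1t (lt_of_le_of_ne h2t hne)]
      _ = ∑ t ∈ Finset.Icc 1 T, lam t * d t := Finset.sum_erase_add _ _ hTmem
  have hnonneg : 0 ≤ ∑ t ∈ Finset.Icc 1 T, (nu t * (d t - d (t-1)) + A' t (sstar t) * d t) := by
    rw [hkey]; exact Finset.sum_nonneg hlampos
  linarith
end
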